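/- arXiv:1803.05783 — 2 statements merged into one kernel-verified Lean document; each statement's English description precedes it below -/
import Mathlib

section
/- Let λ, σ > 0 be fixed and for (x, y, θ) ∈ ℝ³ let ψ_{x,y,θ} : ℝ² → ℂ be the Gabor filter ψ_{x,y,θ}(u,v) = exp(2πiX/λ)·exp(−(X²+Y²)/(2σ²)), where X = (u−x)cosθ + (v−y)sinθ and Y = −(u−x)sinθ + (v−y)cosθ. Then the generating kernel K(p,p₀) = Re⟨ψ_p, ψ_{p₀}⟩_{L²(ℝ²;ℂ)} satisfies, for p = (x,y,θ) and p₀ = (0,0,0): K(p, p₀) = σ²π · exp(−x²/(4σ²) − y²/(4σ²) − 2σ²π²(1−cosθ)/λ²) · cos(π(x(1+cosθ) + y·sinθ)/λ). -/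
open MeasureTheory

/-- Rotated horizontal coordinate of the Gabor filter centered at `(x,y)` with
orientation `θ`: `X = (u−x)cosθ + (v−y)sinθ`. -/
noncomputable def gaborX (x y θ u v : ℝ) : ℝ :=
  (u - x) * Real.cos θ + (v - y) * Real.sin θ

/-- Rotated vertical coordinate: `Y = −(u−x)sinθ + (v−y)cosθ`. -/
noncomputable def gaborY (x y θ u v : ℝ) : ℝ :=
  -(u - x) * Real.sin θ + (v - y) * Real.cos θ

/-- The Gabor filter `ψ_{x,y,θ}(u,v) = exp(2πiX/λ)·exp(−(X²+Y²)/(2σ²))` with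
wavelength `l` and width `σ`. -/
noncomputable def gabor (l σ x y θ : ℝ) (w : ℝ × ℝ) : ℂ :=
  Complex.exp (2 * (Real.pi : ℂ) * Complex.I * (gaborX x y θ w.1 w.2 : ℂ) / (l : ℂ)) *
    Complex.exp
      (-(((gaborX x y θ w.1 w.2 : ℂ) ^ 2 + (gaborY x y θ w.1 w.2 : ℂ) ^ 2) /
        (2 * (σ : ℂ) ^ 2)))

lemma gabor_sq (x y θ u v : ℝ) :
    gaborX x y θ u v ^ 2 + gaborY x y θ u v ^ 2 = (u - x) ^ 2 + (v - y) ^ 2 := by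
  simp only [gaborX, gaborY]
  linear_combination ((u - x) ^ 2 + (v - y) ^ 2) * Real.sin_sq_add_cos_sq θ

/-- The generating kernel of the Gabor family evaluated at `p = (x,y,θ)`,
`p₀ = (0,0,0)`: `K(p,p₀) = Re⟨ψ_p, ψ_{p₀}⟩_{L²}` equals
`σ²π · exp(−x²/(4σ²) − y²/(4σ²) − 2σ²π²(1−cosθ)/λ²) · cos(π(x(1+cosθ) + y sinθ)/λ)`. -/
theorem gabor_generating_kernel_formula (l σ : ℝ) (hl : 0 < l) (hσ : 0 < σ)
    (x y θ : ℝ) :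
    (∫ w : ℝ × ℝ, gabor l σ x y θ w * (starRingEnd ℂ) (gabor l σ 0 0 0 w)).re =
      σ ^ 2 * Real.pi *
        Real.exp (-(x ^ 2 / (4 * σ ^ 2)) - y ^ 2 / (4 * σ ^ 2)
            - 2 * σ ^ 2 * Real.pi ^ 2 * (1 - Real.cos θ) / l ^ 2) *
        Real.cos (Real.pi * (x * (1 + Real.cos θ) + y * Real.sin θ) / l) := by
  have hσ0 : (σ : ℂ) ≠ 0 := by exact_mod_cast hσ.ne'
  have hl0 : (l : ℂ) ≠ 0 := by exact_mod_cast hl.ne'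
  set b : ℂ := -(1 / (σ : ℂ) ^ 2) with hb_def
  have hbR : b = ((-(1 / σ ^ 2) : ℝ) : ℂ) := by push_cast [hb_def]; ring
  have hb : b.re < 0 := by
    rw [hbR, Complex.ofReal_re]
    have : (0:ℝ) < 1 / σ ^ 2 := by positivity
    linarith
  set c₁ : ℂ := (x : ℂ) / (σ:ℂ)^2 + 2 * (Real.pi:ℂ) * Complex.I * ((Real.cos θ : ℂ) - 1) / (l:ℂ) with hc₁
  set c₂ : ℂ := (y : ℂ) / (σ:ℂ)^2 + 2 * (Real.pi:ℂ) * Complex.I * (Real.sin θ : ℂ) / (l:ℂ) with hc₂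
  set d₁ : ℂ := -((x:ℂ)^2 / (2 * (σ:ℂ)^2)) - 2 * (Real.pi:ℂ) * Complex.I * (x:ℂ) * (Real.cos θ : ℂ) / (l:ℂ) with hd₁
  set d₂ : ℂ := -((y:ℂ)^2 / (2 * (σ:ℂ)^2)) - 2 * (Real.pi:ℂ) * Complex.I * (y:ℂ) * (Real.sin θ : ℂ) / (l:ℂ) with hd₂
  have key : ∀ w : ℝ × ℝ, gabor l σ x y θ w * (starRingEnd ℂ) (gabor l σ 0 0 0 w)
      = Complex.exp (b * (w.1:ℂ)^2 + c₁ * (w.1:ℂ) + d₁) *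
        Complex.exp (b * (w.2:ℂ)^2 + c₂ * (w.2:ℂ) + d₂) := by
    rintro ⟨u, v⟩
    have h1 : ((gaborX x y θ u v : ℂ))^2 + ((gaborY x y θ u v : ℂ))^2
        = ((u:ℂ) - x)^2 + ((v:ℂ) - y)^2 := by
      exact_mod_cast congrArg Complex.ofReal (gabor_sq x y θ u v)
    have h1' : ((gaborX 0 0 0 u v : ℂ))^2 + ((gaborY 0 0 0 u v : ℂ))^2
        = ((u:ℂ))^2 + ((v:ℂ))^2 := by
      have h := gabor_sq 0 0 0 u v
      rw [sub_zero, sub_zero] at h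
      exact_mod_cast congrArg Complex.ofReal h
    have hX : ((gaborX x y θ u v : ℝ) : ℂ)
        = ((u:ℂ) - x) * (Real.cos θ : ℂ) + ((v:ℂ) - y) * (Real.sin θ : ℂ) := by
      norm_cast
    have hX0 : ((gaborX 0 0 0 u v : ℝ) : ℂ) = (u : ℂ) := by
      have : gaborX 0 0 0 u v = u := by simp [gaborX]
      exact_mod_cast congrArg Complex.ofReal this
    simp only [gabor, map_mul, ← Complex.exp_conj, map_div₀, map_add, map_neg,
      map_mul, map_pow, map_ofNat, Complex.conj_ofReal, Complex.conj_I, ← Complex.exp_add]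
    rw [h1, h1', hX, hX0]
    congr 1
    ring
  rw [Measure.volume_eq_prod]
  simp_rw [key]
  rw [integral_prod_mul (f := fun u : ℝ => Complex.exp (b * (u:ℂ)^2 + c₁ * (u:ℂ) + d₁))
    (g := fun v : ℝ => Complex.exp (b * (v:ℂ)^2 + c₂ * (v:ℂ) + d₂)), integral_cexp_quadratic hb c₁ d₁, integral_cexp_quadratic hb c₂ d₂]
  have hne : ((Real.pi:ℂ) / -b) ≠ 0 := by
    rw [hb_def, neg_neg]
    refine div_ne_zero ?_ ?_
    · exact_mod_cast Real.pi_ne_zero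
    · exact one_div_ne_zero (pow_ne_zero 2 hσ0)
  rw [mul_mul_mul_comm, ← Complex.cpow_add _ _ hne, ← Complex.exp_add]
  have h12 : (1/2 : ℂ) + 1/2 = 1 := by norm_num
  rw [h12, Complex.cpow_one]
  have hpow : (Real.pi:ℂ) / -b = ((Real.pi * σ^2 : ℝ) : ℂ) := by
    rw [hb_def, neg_neg]
    push_cast
    field_simp
  set R : ℝ := -(x ^ 2 / (4 * σ ^ 2)) - y ^ 2 / (4 * σ ^ 2)
      - 2 * σ ^ 2 * Real.pi ^ 2 * (1 - Real.cos θ) / l ^ 2 with hR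
  set Im : ℝ := -(Real.pi * (x * (1 + Real.cos θ) + y * Real.sin θ) / l) with hIm
  have h4b : ∀ z : ℂ, z / (4 * b) = -(z * (σ:ℂ)^2) / 4 := by
    intro z
    rw [hb_def]
    field_simp
  have haux : ∀ a t : ℂ, -((a / (σ:ℂ)^2 + t * Complex.I)^2 * (σ:ℂ)^2) / 4
      = -(a^2 / (4 * (σ:ℂ)^2)) - a * t * Complex.I / 2 + (σ:ℂ)^2 * t^2 / 4 := by
    intro a t
    have hI : Complex.I ^ 2 = -1 := Complex.I_sq
    have h2 : (σ:ℂ)^2 ≠ 0 := pow_ne_zero 2 hσ0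
    field_simp
    linear_combination (-(2:ℂ) * (σ:ℂ)^4 * t^2) * hI
  have e₁ : c₁ = (x:ℂ) / (σ:ℂ)^2 + (2*(Real.pi:ℂ)*((Real.cos θ:ℂ) - 1)/(l:ℂ)) * Complex.I := by
    rw [hc₁]; ring
  have e₂ : c₂ = (y:ℂ) / (σ:ℂ)^2 + (2*(Real.pi:ℂ)*(Real.sin θ:ℂ)/(l:ℂ)) * Complex.I := by
    rw [hc₂]; ring
  have hE : d₁ - c₁ ^ 2 / (4 * b) + (d₂ - c₂ ^ 2 / (4 * b)) = (R : ℂ) + (Im : ℂ) * Complex.I := by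
    rw [h4b, h4b, e₁, e₂, haux, haux, hd₁, hd₂, hR, hIm]
    have htrig : Complex.sin (θ:ℂ) ^ 2 + Complex.cos (θ:ℂ) ^ 2 = 1 :=
      Complex.sin_sq_add_cos_sq (θ:ℂ)
    push_cast
    linear_combination (-(σ:ℂ)^2 * (Real.pi:ℂ)^2 / (l:ℂ)^2) * htrig
  rw [hpow, hE, Complex.exp_add, ← Complex.ofReal_exp, ← mul_assoc, ← Complex.ofReal_mul,
    Complex.re_ofReal_mul, Complex.exp_ofReal_mul_I_re, hIm, Real.cos_neg]
  ring
end

section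
/- Fix λ, σ, β > 0 and define, for parameters (x, y, θ, t, α) ∈ ℝ⁵, the spatiotemporal Gabor filter ψ_{x,y,θ,t,α} : ℝ³ → ℂ by ψ_{x,y,θ,t,α}(u,v,s) = exp(−2πi(X/λ + α(s−t)))·exp(−(X²+Y²)/(2σ²) − (s−t)²/(2β²)), where X = (u−x)cosθ + (v−y)sinθ and Y = −(u−x)sinθ + (v−y)cosθ. Then for any two parameter points with the same time parameter t = t₀, the generating kernel K(p,p₀) := Re ∫_{ℝ³} ψ_p · conj(ψ_{p₀}) factorizes as K((x,y,θ,t,α), (x₀,y₀,θ₀,t,α₀)) = K_spatial((x,y,θ), (x₀,y₀,θ₀)) · β√π · exp(−π²β²(α−α₀)²), where K_spatial is the generating kernel of the two-dimensional Gabor family with parameters λ, σ. -/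
open MeasureTheory

/-- The generating kernel of the 2D Gabor family:
`K_spatial(p, p₀) = Re⟨ψ_p, ψ_{p₀}⟩_{L²(ℝ²)}`. -/
noncomputable def Kspatial (l σ : ℝ) (p p₀ : ℝ × ℝ × ℝ) : ℝ :=
  (∫ w : ℝ × ℝ,
      gabor l σ p.1 p.2.1 p.2.2 w * (starRingEnd ℂ) (gabor l σ p₀.1 p₀.2.1 p₀.2.2 w)).re

/-- The inseparable spatiotemporal Gabor filter
`ψ_{x,y,θ,t,α}(u,v,s) = exp(−2πi(X/λ + α(s−t)))·exp(−(X²+Y²)/(2σ²) − (s−t)²/(2β²))`. -/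
noncomputable def gaborST (l σ β x y θ t α : ℝ) (w : ℝ × ℝ × ℝ) : ℂ :=
  Complex.exp (-(2 * (Real.pi : ℂ) * Complex.I *
      ((gaborX x y θ w.1 w.2.1 : ℂ) / (l : ℂ) + (α : ℂ) * ((w.2.2 : ℂ) - (t : ℂ))))) *
    Complex.exp
      (-(((gaborX x y θ w.1 w.2.1 : ℂ) ^ 2 + (gaborY x y θ w.1 w.2.1 : ℂ) ^ 2) /
            (2 * (σ : ℂ) ^ 2)) -
        ((w.2.2 : ℂ) - (t : ℂ)) ^ 2 / (2 * (β : ℂ) ^ 2))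

/-! ### Auxiliary definitions and lemmas -/

/-- Temporal Gaussian factor of the spatiotemporal kernel integrand. -/
noncomputable def tempQ (β α α₀ : ℝ) (τ : ℝ) : ℂ :=
  Complex.exp (-(1/(β:ℂ)^2) * (τ:ℂ)^2 +
    (-(2*(Real.pi:ℂ)*Complex.I*((α:ℂ)-(α₀:ℂ)))) * (τ:ℂ) + 0)

lemma gaborST_mul_conj_eq (l σ β x y θ t α x₀ y₀ θ₀ α₀ : ℝ) (w : ℝ × ℝ × ℝ) :
    gaborST l σ β x y θ t α w * (starRingEnd ℂ) (gaborST l σ β x₀ y₀ θ₀ t α₀ w) =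
    ((starRingEnd ℂ) (gabor l σ x y θ (w.1, w.2.1)) * gabor l σ x₀ y₀ θ₀ (w.1, w.2.1)) *
      tempQ β α α₀ (w.2.2 - t) := by
  simp only [gaborST, gabor, tempQ, map_mul, RingHomCompTriple.comp_apply, RingHom.id_apply,
    ← Complex.exp_conj, ← Complex.exp_add, map_neg, map_add, map_sub, map_div₀,
    map_mul, map_pow, map_ofNat, Complex.conj_ofReal, Complex.conj_I, Complex.ofReal_sub]
  congr 1
  ring

lemma norm_gabor (l σ x y θ : ℝ) (w : ℝ × ℝ) :
    ‖gabor l σ x y θ w‖ =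
      Real.exp (-(1/(2*σ^2)) * (w.1-x)^2) * Real.exp (-(1/(2*σ^2)) * (w.2-y)^2) := by
  unfold gabor
  rw [norm_mul]
  have h1 : 2 * (Real.pi : ℂ) * Complex.I * (gaborX x y θ w.1 w.2 : ℂ) / (l : ℂ)
      = ((2 * Real.pi * gaborX x y θ w.1 w.2 / l : ℝ) : ℂ) * Complex.I := by push_cast; ring
  have h2 : -(((gaborX x y θ w.1 w.2 : ℂ) ^ 2 + (gaborY x y θ w.1 w.2 : ℂ) ^ 2) /
        (2 * (σ : ℂ) ^ 2))
      = ((-(((gaborX x y θ w.1 w.2) ^ 2 + (gaborY x y θ w.1 w.2) ^ 2) / (2 * σ ^ 2)) : ℝ) : ℂ) := by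
    push_cast; ring
  rw [h1, h2, Complex.norm_exp_ofReal_mul_I,
    Complex.norm_exp_ofReal, one_mul, ← Real.exp_add]
  congr 1
  have key : (gaborX x y θ w.1 w.2)^2 + (gaborY x y θ w.1 w.2)^2 = (w.1-x)^2 + (w.2-y)^2 := by
    unfold gaborX gaborY
    linear_combination ((w.1-x)^2+(w.2-y)^2) * Real.sin_sq_add_cos_sq θ
  rw [key]; ring

lemma cont_gabor (l σ x y θ : ℝ) : Continuous (gabor l σ x y θ) := by
  unfold gabor gaborX gaborY; fun_prop

lemma integrable_gabor_mul (l σ x y θ x₀ y₀ θ₀ : ℝ) (hσ : 0 < σ)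
    (f g : ℂ → ℂ) (hf : Continuous f) (hg : Continuous g)
    (hnf : ∀ z, ‖f z‖ = ‖z‖) (hng : ∀ z, ‖g z‖ = ‖z‖) :
    Integrable (fun w : ℝ × ℝ => f (gabor l σ x y θ w) * g (gabor l σ x₀ y₀ θ₀ w)) := by
  have ha : (0:ℝ) < 1/(2*σ^2) := by positivity
  have hG : Integrable (fun w : ℝ × ℝ =>
      Real.exp (-(1/(2*σ^2)) * (w.1 - x)^2) * Real.exp (-(1/(2*σ^2)) * (w.2 - y)^2)) := by
    simpa [← Measure.volume_eq_prod] using ((integrable_exp_neg_mul_sq ha).comp_sub_right x).mul_prod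
      ((integrable_exp_neg_mul_sq ha).comp_sub_right y)
  refine hG.mono' ?_ ?_
  · exact ((hf.comp (cont_gabor l σ x y θ)).mul
      (hg.comp (cont_gabor l σ x₀ y₀ θ₀))).aestronglyMeasurable
  · filter_upwards with w
    rw [norm_mul, hnf, hng, norm_gabor l σ x y θ, norm_gabor l σ x₀ y₀ θ₀]
    have h0 : Real.exp (-(1/(2*σ^2)) * (w.1-x₀)^2) * Real.exp (-(1/(2*σ^2)) * (w.2-y₀)^2) ≤ 1 := by
      have h : ∀ r : ℝ, Real.exp (-(1/(2*σ^2)) * r^2) ≤ 1 := fun r => by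
        rw [Real.exp_le_one_iff]; nlinarith [sq_nonneg r]
      calc _ ≤ 1*1 := mul_le_mul (h _) (h _) (Real.exp_pos _).le one_pos.le
        _ = 1 := by ring
    exact mul_le_of_le_one_right (by positivity) h0

lemma tempQ_integrable (β α α₀ : ℝ) (hβ : 0 < β) : Integrable (tempQ β α α₀) := by
  have hb : (-(1/(β:ℂ)^2)).re < 0 := by
    have h : (-(1/(β:ℂ)^2)) = ((-(1/β^2) : ℝ) : ℂ) := by push_cast; ring
    rw [h, Complex.ofReal_re]
    have : (0:ℝ) < 1/β^2 := by positivity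
    linarith
  exact integrable_cexp_quadratic' hb _ _

lemma tempQ_integral (β α α₀ : ℝ) (hβ : 0 < β) :
    ∫ τ : ℝ, tempQ β α α₀ τ =
      ((β * Real.sqrt Real.pi * Real.exp (-(Real.pi ^ 2) * β ^ 2 * (α - α₀) ^ 2) : ℝ) : ℂ) := by
  have hb : (-(1/(β:ℂ)^2)).re < 0 := by
    have h : (-(1/(β:ℂ)^2)) = ((-(1/β^2) : ℝ) : ℂ) := by push_cast; ring
    rw [h, Complex.ofReal_re]
    have : (0:ℝ) < 1/β^2 := by positivity
    linarith
  have hβc : (β:ℂ) ≠ 0 := Complex.ofReal_ne_zero.mpr hβ.ne'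
  rw [show (∫ τ : ℝ, tempQ β α α₀ τ) = ∫ τ : ℝ, Complex.exp (-(1/(β:ℂ)^2) * (τ:ℂ)^2 +
      (-(2*(Real.pi:ℂ)*Complex.I*((α:ℂ)-(α₀:ℂ)))) * (τ:ℂ) + 0) from rfl,
    integral_cexp_quadratic hb]
  have e1 : ((Real.pi : ℂ) / -(-(1/(β:ℂ)^2))) = ((Real.pi * β^2 : ℝ) : ℂ) := by
    push_cast; field_simp
  have e2 : (0 : ℂ) - (-(2*(Real.pi:ℂ)*Complex.I*((α:ℂ)-(α₀:ℂ))))^2 / (4 * -(1/(β:ℂ)^2)) =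
      ((-(Real.pi ^ 2) * β ^ 2 * (α - α₀) ^ 2 : ℝ) : ℂ) := by
    push_cast
    field_simp
    ring_nf
    rw [Complex.I_sq]
    ring
  rw [e1, e2]
  have e3 : (((Real.pi * β^2 : ℝ)) : ℂ) ^ (1/2 : ℂ) = ((β * Real.sqrt Real.pi : ℝ) : ℂ) := by
    rw [show (1/2 : ℂ) = ((1/2 : ℝ) : ℂ) by norm_num,
      ← Complex.ofReal_cpow (by positivity)]
    congr 1
    rw [← Real.sqrt_eq_rpow, Real.sqrt_mul Real.pi_pos.le, Real.sqrt_sq hβ.le]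
    ring
  rw [e3, ← Complex.ofReal_exp, ← Complex.ofReal_mul]

/-- For two spatiotemporal Gabor filters with the same time parameter `t`, the
generating kernel factorizes as the spatial kernel times a Gaussian in the
velocity difference:
`K((x,y,θ,t,α),(x₀,y₀,θ₀,t,α₀)) = K_spatial((x,y,θ),(x₀,y₀,θ₀)) · β√π · exp(−π²β²(α−α₀)²)`. -/
theorem spatiotemporal_kernel_factorization (l σ β : ℝ) (hl : 0 < l)
    (hσ : 0 < σ) (hβ : 0 < β) (x y θ t α x₀ y₀ θ₀ α₀ : ℝ) :
    (∫ w : ℝ × ℝ × ℝ,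
        gaborST l σ β x y θ t α w * (starRingEnd ℂ) (gaborST l σ β x₀ y₀ θ₀ t α₀ w)).re =
      Kspatial l σ (x, y, θ) (x₀, y₀, θ₀) *
        (β * Real.sqrt Real.pi * Real.exp (-(Real.pi ^ 2) * β ^ 2 * (α - α₀) ^ 2)) := by
  set F : ℝ × ℝ → ℂ := fun w => gabor l σ x y θ w * (starRingEnd ℂ) (gabor l σ x₀ y₀ θ₀ w)
    with hF
  set Fc : ℝ × ℝ → ℂ := fun w => (starRingEnd ℂ) (gabor l σ x y θ w) * gabor l σ x₀ y₀ θ₀ w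
    with hFc
  set g : ℝ → ℂ := fun s => tempQ β α α₀ (s - t) with hgdef
  have hFcInt : Integrable Fc :=
    integrable_gabor_mul l σ x y θ x₀ y₀ θ₀ hσ _ id Complex.continuous_conj continuous_id
      (fun z => RCLike.norm_conj z) (fun _ => rfl)
  have hgInt : Integrable g := (tempQ_integrable β α α₀ hβ).comp_sub_right t
  set T : ℝ := β * Real.sqrt Real.pi * Real.exp (-(Real.pi ^ 2) * β ^ 2 * (α - α₀) ^ 2) with hT
  have hmp : MeasurePreserving (MeasurableEquiv.prodAssoc : (ℝ × ℝ) × ℝ ≃ᵐ ℝ × ℝ × ℝ)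
      volume volume := measurePreserving_prodAssoc volume volume volume
  have step1 : (∫ w : ℝ × ℝ × ℝ,
      gaborST l σ β x y θ t α w * (starRingEnd ℂ) (gaborST l σ β x₀ y₀ θ₀ t α₀ w)) =
      ∫ w : ℝ × ℝ × ℝ, Fc (w.1, w.2.1) * g w.2.2 := by
    refine integral_congr_ae (Filter.Eventually.of_forall fun w => ?_)
    exact gaborST_mul_conj_eq l σ β x y θ t α x₀ y₀ θ₀ α₀ w
  have step2 : (∫ w : ℝ × ℝ × ℝ, Fc (w.1, w.2.1) * g w.2.2) =
      ∫ z : (ℝ × ℝ) × ℝ, Fc z.1 * g z.2 := by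
    rw [← hmp.integral_comp MeasurableEquiv.prodAssoc.measurableEmbedding
      (fun w : ℝ × ℝ × ℝ => Fc (w.1, w.2.1) * g w.2.2)]
    rfl
  have step3 : (∫ z : (ℝ × ℝ) × ℝ, Fc z.1 * g z.2) = (∫ w, Fc w) * (∫ s, g s) :=
    integral_prod_mul Fc g
  have hFcF : (∫ w, Fc w) = (starRingEnd ℂ) (∫ w, F w) := by
    rw [← integral_conj]
    refine integral_congr_ae (Filter.Eventually.of_forall fun w => ?_)
    simp [hF, hFc, map_mul]
  have hgT : (∫ s, g s) = (T : ℂ) := by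
    rw [hgdef]
    rw [integral_sub_right_eq_self (tempQ β α α₀) t]
    exact tempQ_integral β α α₀ hβ
  rw [step1, step2, step3, hFcF, hgT]
  have : Kspatial l σ (x, y, θ) (x₀, y₀, θ₀) = (∫ w, F w).re := rfl
  rw [this]
  simp [Complex.mul_re, Complex.conj_re, Complex.conj_im, Complex.ofReal_re, Complex.ofReal_im]
end
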